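/- Let α ∈ (0,1), let λ¹, λ² ∈ ℝ^A, and set λ^α = αλ¹ + (1−α)λ². Assume λ¹, λ², λ^α all belong to the domain 𝒫. If (τ¹, z¹) solves the dynamic programming system at λ¹, (τ², z²) solves it at λ², and (τ^α, z^α) solves it at λ^α, then τ^α_i ≥ α τ¹_i + (1−α) τ²_i for every node i ∈ N. -/

import Mathlib

/-!
Call `u` a (strict) subsolution at `λ` if `u_d ≤ 0` and `u_i ≤ φ_i(λ + u ∘ head)` (resp. `<`)
for `i ≠ d`. By concavity of the `φ_i`, convex combinations of subsolutions are subsolutions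
at the combined delays, so `σ = ατ¹ + (1-α)τ²` is a subsolution at `λ^α`. The gradient
inequality for `φ_i`, whose gradient is a probability vector, gives
`φ_i(y) ≤ φ_i(z) + M` whenever `y ≤ z + M`; with it, a maximum of `u - τ^α` over the finite
node set cannot sit at a node `i ≠ d` when `u` is a strict subsolution, so every strict
subsolution lies below the solution `τ^α`. Mixing `σ` with the strict subsolution `τ̂`
witnessing `λ^α ∈ 𝒫` gives strict subsolutions `(1-t)τ̂ + tσ ≤ τ^α` for `t < 1`, and letting `t → 1` yields `σ ≤ τ^α`.
-/

/-- `IsPathTo tail head d i p` : `p` is a list of arcs forming a directed path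
from node `i` to the destination `d`. -/
def IsPathTo {N A : Type} (tail head : A → N) (d : N) : N → List A → Prop
  | i, [] => i = d
  | i, a :: p => tail a = i ∧ IsPathTo tail head d (head a) p

open Set

theorem ConcaveOn.le_add_of_hasFDerivAt {E : Type*} [NormedAddCommGroup E] [NormedSpace ℝ E]
    {s : Set E} {f : E → ℝ} {L : E →L[ℝ] ℝ} {y z : E}
    (hf : ConcaveOn ℝ s f) (hy : y ∈ s) (hz : z ∈ s) (hL : HasFDerivAt f L z) :
    f y ≤ f z + L (y - z) := by
  let ℓ : ℝ →ᵃ[ℝ] E := AffineMap.lineMap z y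
  have hℓ : HasDerivAt ℓ (y - z) 0 := AffineMap.hasDerivAt_lineMap
  have hslope := (hf.comp_affineMap ℓ).slope_le_of_hasDerivAt (x := 0) (y := 1)
    (by simpa [ℓ] using hz) (by simpa [ℓ] using hy) one_pos
    ((AffineMap.lineMap_apply_zero z y (k := ℝ)).symm ▸ hL |>.comp_hasDerivAt 0 hℓ)
  simp only [slope, sub_zero, inv_one, Function.comp_apply, AffineMap.lineMap_apply_one,
    AffineMap.lineMap_apply_zero, vsub_eq_sub, smul_eq_mul, one_mul, ℓ] at hslope
  linarith

theorem ConcaveOn.le_add_of_le_add {ι : Type*} [Fintype ι] {s : Set (ι → ℝ)}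
    {f : (ι → ℝ) → ℝ} {w y z : ι → ℝ} {M : ℝ} (hf : ConcaveOn ℝ s f) (hy : y ∈ s) (hz : z ∈ s)
    (hL : HasFDerivAt f (∑ a, w a • ContinuousLinearMap.proj a : (ι → ℝ) →L[ℝ] ℝ) z)
    (hw : ∀ a, 0 ≤ w a) (hw₁ : ∑ a, w a = 1) (hyz : ∀ a, y a ≤ z a + M) :
    f y ≤ f z + M := by
  have hgrad : (∑ a, w a • ContinuousLinearMap.proj a : (ι → ℝ) →L[ℝ] ℝ) (y - z) ≤ M :=
    calc (∑ a, w a • ContinuousLinearMap.proj a : (ι → ℝ) →L[ℝ] ℝ) (y - z)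
        = ∑ a, w a * (y a - z a) := by simp
      _ ≤ ∑ a, w a * M :=
        Finset.sum_le_sum fun a _ => mul_le_mul_of_nonneg_left (by linarith [hyz a]) (hw a)
      _ = M := by rw [← Finset.sum_mul, hw₁, one_mul]
  linarith [hf.le_add_of_hasFDerivAt hy hz hL]

theorem le_of_forall_mem_Ico_sub_smul_add_smul_le {E : Type*} [TopologicalSpace E]
    [AddCommGroup E] [Module ℝ E] [ContinuousAdd E] [ContinuousSMul ℝ E] [PartialOrder E]
    [OrderClosedTopology E] {u v w : E} (h : ∀ t ∈ Ico (0 : ℝ) 1, (1 - t) • u + t • v ≤ w) :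
    v ≤ w := by
  have hclosed : IsClosed {t : ℝ | (1 - t) • u + t • v ≤ w} :=
    isClosed_le (by fun_prop) continuous_const
  have h1 : (1 : ℝ) ∈ closure (Ico (0 : ℝ) 1) := by
    rw [closure_Ico zero_ne_one]
    exact right_mem_Icc.2 zero_le_one
  simpa using hclosed.closure_subset_iff.2 h h1

section Subsolution

variable {N A : Type*} (head : A → N) (d : N) (phi : N → (A → ℝ) → ℝ)

def IsSolution (lam : A → ℝ) (τ : N → ℝ) : Prop :=
  τ d = 0 ∧ ∀ i, i ≠ d → τ i = phi i (lam + τ ∘ head)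

def IsSubsolution (lam : A → ℝ) (u : N → ℝ) : Prop :=
  u d ≤ 0 ∧ ∀ i, i ≠ d → u i ≤ phi i (lam + u ∘ head)

def IsStrictSubsolution (lam : A → ℝ) (u : N → ℝ) : Prop :=
  u d ≤ 0 ∧ ∀ i, i ≠ d → u i < phi i (lam + u ∘ head)

variable {head d phi}

theorem IsSolution.isSubsolution {lam : A → ℝ} {τ : N → ℝ} (h : IsSolution head d phi lam τ) :
    IsSubsolution head d phi lam τ :=
  ⟨h.1.le, fun i hi => (h.2 i hi).le⟩

theorem add_comp_smul_add_smul (lam₁ lam₂ : A → ℝ) (u₁ u₂ : N → ℝ) (s t : ℝ) :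
    (s • lam₁ + t • lam₂) + (s • u₁ + t • u₂) ∘ head =
      s • (lam₁ + u₁ ∘ head) + t • (lam₂ + u₂ ∘ head) := by
  funext a
  simp only [Pi.add_apply, Pi.smul_apply, Function.comp_apply, smul_eq_mul]
  ring

theorem smul_add_smul_nonpos {x y s t : ℝ} (hx : x ≤ 0) (hy : y ≤ 0) (hs : 0 ≤ s) (ht : 0 ≤ t) :
    s • x + t • y ≤ 0 :=
  add_nonpos (mul_nonpos_of_nonneg_of_nonpos hs hx) (mul_nonpos_of_nonneg_of_nonpos ht hy)

theorem IsSubsolution.smul_add_smul (hconc : ∀ i, i ≠ d → ConcaveOn ℝ univ (phi i))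
    {lam₁ lam₂ : A → ℝ} {u₁ u₂ : N → ℝ} (h₁ : IsSubsolution head d phi lam₁ u₁)
    (h₂ : IsSubsolution head d phi lam₂ u₂) {s t : ℝ} (hs : 0 ≤ s) (ht : 0 ≤ t)
    (hst : s + t = 1) :
    IsSubsolution head d phi (s • lam₁ + t • lam₂) (s • u₁ + t • u₂) := by
  refine ⟨smul_add_smul_nonpos h₁.1 h₂.1 hs ht, fun i hi => ?_⟩
  rw [add_comp_smul_add_smul]
  calc s * u₁ i + t * u₂ i
      ≤ s * phi i (lam₁ + u₁ ∘ head) + t * phi i (lam₂ + u₂ ∘ head) :=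
        add_le_add (mul_le_mul_of_nonneg_left (h₁.2 i hi) hs)
          (mul_le_mul_of_nonneg_left (h₂.2 i hi) ht)
    _ ≤ _ := (hconc i hi).2 trivial trivial hs ht hst

theorem IsStrictSubsolution.smul_add_smul (hconc : ∀ i, i ≠ d → ConcaveOn ℝ univ (phi i))
    {lam₁ lam₂ : A → ℝ} {u₁ u₂ : N → ℝ} (h₁ : IsStrictSubsolution head d phi lam₁ u₁)
    (h₂ : IsSubsolution head d phi lam₂ u₂) {s t : ℝ} (hs : 0 < s) (ht : 0 ≤ t)
    (hst : s + t = 1) :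
    IsStrictSubsolution head d phi (s • lam₁ + t • lam₂) (s • u₁ + t • u₂) := by
  refine ⟨smul_add_smul_nonpos h₁.1 h₂.1 hs.le ht, fun i hi => ?_⟩
  rw [add_comp_smul_add_smul]
  calc s * u₁ i + t * u₂ i
      < s * phi i (lam₁ + u₁ ∘ head) + t * phi i (lam₂ + u₂ ∘ head) :=
        add_lt_add_of_lt_of_le (mul_lt_mul_of_pos_left (h₁.2 i hi) hs)
          (mul_le_mul_of_nonneg_left (h₂.2 i hi) ht)
    _ ≤ _ := (hconc i hi).2 trivial trivial hs.le ht hst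

theorem IsStrictSubsolution.le_of_isSolution [Finite N]
    (hphi : ∀ i, i ≠ d → ∀ y z : A → ℝ, ∀ M, (∀ a, y a ≤ z a + M) → phi i y ≤ phi i z + M)
    {lam : A → ℝ} {u τ : N → ℝ} (hu : IsStrictSubsolution head d phi lam u)
    (hτ : IsSolution head d phi lam τ) :
    u ≤ τ := by
  have : Nonempty N := ⟨d⟩
  obtain ⟨i₀, hi₀⟩ := Finite.exists_max (u - τ)
  simp only [Pi.sub_apply] at hi₀
  suffices hmax : u i₀ - τ i₀ ≤ 0 from fun j => by linarith [hi₀ j]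
  by_cases hd : i₀ = d
  · subst hd
    linarith [hu.1, hτ.1]
  · have hle : phi i₀ (lam + u ∘ head) ≤ phi i₀ (lam + τ ∘ head) + (u i₀ - τ i₀) :=
      hphi i₀ hd _ _ _ fun a => by
        simp only [Pi.add_apply, Function.comp_apply]
        linarith [hi₀ (head a)]
    linarith [hu.2 i₀ hd, hτ.2 i₀ hd]

end Subsolution

theorem stmt9_general {N A : Type} [Fintype N] [Fintype A] [DecidableEq N]
    (tail head : A → N) (d : N)
    (phi : N → (A → ℝ) → ℝ) (Dphi : N → (A → ℝ) → A → ℝ)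
    (hconc : ∀ i, i ≠ d → ConcaveOn ℝ Set.univ (phi i))
    (hderiv : ∀ i, i ≠ d → ∀ z : A → ℝ,
      HasFDerivAt (phi i)
        (∑ a, Dphi i z a • (ContinuousLinearMap.proj a : (A → ℝ) →L[ℝ] ℝ)) z)
    (hDnn : ∀ i, i ≠ d → ∀ z a, 0 ≤ Dphi i z a)
    (hDzero : ∀ i, i ≠ d → ∀ (z : A → ℝ) a, tail a ≠ i → Dphi i z a = 0)
    (hDsum : ∀ i, i ≠ d → ∀ z : A → ℝ,
      ∑ a ∈ Finset.univ.filter (fun a => tail a = i), Dphi i z a = 1)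
    (α : ℝ) (hα : α ∈ Set.Ioo (0:ℝ) 1)
    (lam₁ lam₂ : A → ℝ)
    (hPα : ∃ τhat : N → ℝ, τhat d ≤ 0 ∧
      ∀ i, i ≠ d → τhat i <
        phi i (fun a => (α * lam₁ a + (1 - α) * lam₂ a) + τhat (head a)))
    (τ₁ : N → ℝ) (z₁ : A → ℝ)
    (hτd₁ : τ₁ d = 0) (hz₁ : ∀ a, z₁ a = lam₁ a + τ₁ (head a))
    (hτ₁ : ∀ i, i ≠ d → τ₁ i = phi i z₁)
    (τ₂ : N → ℝ) (z₂ : A → ℝ)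
    (hτd₂ : τ₂ d = 0) (hz₂ : ∀ a, z₂ a = lam₂ a + τ₂ (head a))
    (hτ₂ : ∀ i, i ≠ d → τ₂ i = phi i z₂)
    (τα : N → ℝ) (zα : A → ℝ)
    (hτdα : τα d = 0)
    (hzα : ∀ a, zα a = (α * lam₁ a + (1 - α) * lam₂ a) + τα (head a))
    (hτα : ∀ i, i ≠ d → τα i = phi i zα) :
    ∀ i, α * τ₁ i + (1 - α) * τ₂ i ≤ τα i := by
  obtain rfl : z₁ = _ := funext hz₁
  obtain rfl : z₂ = _ := funext hz₂
  obtain rfl : zα = _ := funext hzα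
  have hphi : ∀ i, i ≠ d → ∀ y z : A → ℝ, ∀ M, (∀ a, y a ≤ z a + M) →
      phi i y ≤ phi i z + M := fun i hi y z M =>
    (hconc i hi).le_add_of_le_add trivial trivial (hderiv i hi z) (hDnn i hi z)
      (by rw [← hDsum i hi z, Finset.sum_filter_of_ne fun a _ h => by_contra fun ht =>
        h (hDzero i hi z a ht)])
  let lamα := α • lam₁ + (1 - α) • lam₂
  obtain ⟨τhat, hτhat⟩ : ∃ u, IsStrictSubsolution head d phi lamα u := hPα
  have hσ : IsSubsolution head d phi lamα (α • τ₁ + (1 - α) • τ₂) :=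
    IsSubsolution.smul_add_smul hconc (IsSolution.isSubsolution ⟨hτd₁, hτ₁⟩)
      (IsSolution.isSubsolution ⟨hτd₂, hτ₂⟩) hα.1.le (sub_nonneg.2 hα.2.le) (add_sub_cancel α 1)
  suffices α • τ₁ + (1 - α) • τ₂ ≤ τα from this
  refine le_of_forall_mem_Ico_sub_smul_add_smul_le (u := τhat) fun t ht => ?_
  have hstrict := IsStrictSubsolution.smul_add_smul hconc hτhat hσ (sub_pos.2 ht.2) ht.1
    (sub_add_cancel 1 t)
  rw [← add_smul, sub_add_cancel, one_smul] at hstrict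
  exact hstrict.le_of_isSolution hphi ⟨hτdα, hτα⟩

/-- concavity of the expected delays `τ` as a function of the link
delays `λ`: if `λ¹, λ², λ^α = αλ¹+(1−α)λ²` belong to the domain `𝒫`, and
`(τ¹,z¹)`, `(τ²,z²)`, `(τ^α,z^α)` solve the dynamic programming system at
`λ¹`, `λ²`, `λ^α` respectively, then `τ^α ≥ ατ¹ + (1−α)τ²` componentwise. -/
theorem stmt9 {N A : Type} [Fintype N] [Fintype A] [DecidableEq N] [DecidableEq A]
    (tail head : A → N) (d : N)
    (phi : N → (A → ℝ) → ℝ) (Dphi : N → (A → ℝ) → A → ℝ)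
    (hout : ∀ i, i ≠ d → ∃ a, tail a = i)
    (hconn : ∀ i, ∃ p, IsPathTo tail head d i p)
    (hdep : ∀ i, i ≠ d → ∀ z z' : A → ℝ, (∀ a, tail a = i → z a = z' a) →
      phi i z = phi i z')
    (hcont : ∀ i, i ≠ d → Continuous (phi i))
    (hconc : ∀ i, i ≠ d → ConcaveOn ℝ Set.univ (phi i))
    (hderiv : ∀ i, i ≠ d → ∀ z : A → ℝ,
      HasFDerivAt (phi i)
        (∑ a, Dphi i z a • (ContinuousLinearMap.proj a : (A → ℝ) →L[ℝ] ℝ)) z)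
    (hmono : ∀ i, i ≠ d → Monotone (phi i))
    (hmin : ∀ i, i ≠ d → ∀ z : A → ℝ, ∀ a, tail a = i → phi i z ≤ z a)
    (hDnn : ∀ i, i ≠ d → ∀ z a, 0 ≤ Dphi i z a)
    (hDzero : ∀ i, i ≠ d → ∀ (z : A → ℝ) a, tail a ≠ i → Dphi i z a = 0)
    (hDsum : ∀ i, i ≠ d → ∀ z : A → ℝ,
      ∑ a ∈ Finset.univ.filter (fun a => tail a = i), Dphi i z a = 1)
    (α : ℝ) (hα : α ∈ Set.Ioo (0:ℝ) 1)
    (lam₁ lam₂ : A → ℝ)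
    -- λ¹, λ², λ^α belong to the domain 𝒫
    (hP₁ : ∃ τhat : N → ℝ, τhat d ≤ 0 ∧
      ∀ i, i ≠ d → τhat i < phi i (fun a => lam₁ a + τhat (head a)))
    (hP₂ : ∃ τhat : N → ℝ, τhat d ≤ 0 ∧
      ∀ i, i ≠ d → τhat i < phi i (fun a => lam₂ a + τhat (head a)))
    (hPα : ∃ τhat : N → ℝ, τhat d ≤ 0 ∧
      ∀ i, i ≠ d → τhat i <
        phi i (fun a => (α * lam₁ a + (1 - α) * lam₂ a) + τhat (head a)))
    (τ₁ : N → ℝ) (z₁ : A → ℝ)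
    (hτd₁ : τ₁ d = 0) (hz₁ : ∀ a, z₁ a = lam₁ a + τ₁ (head a))
    (hτ₁ : ∀ i, i ≠ d → τ₁ i = phi i z₁)
    (τ₂ : N → ℝ) (z₂ : A → ℝ)
    (hτd₂ : τ₂ d = 0) (hz₂ : ∀ a, z₂ a = lam₂ a + τ₂ (head a))
    (hτ₂ : ∀ i, i ≠ d → τ₂ i = phi i z₂)
    (τα : N → ℝ) (zα : A → ℝ)
    (hτdα : τα d = 0)
    (hzα : ∀ a, zα a = (α * lam₁ a + (1 - α) * lam₂ a) + τα (head a))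
    (hτα : ∀ i, i ≠ d → τα i = phi i zα) :
    ∀ i, α * τ₁ i + (1 - α) * τ₂ i ≤ τα i :=
  stmt9_general tail head d phi Dphi hconc hderiv hDnn hDzero hDsum α hα lam₁ lam₂ hPα τ₁ z₁ hτd₁
    hz₁ hτ₁ τ₂ z₂ hτd₂ hz₂ hτ₂ τα zα hτdα hzα hτα
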